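/- Let P be a double histogram, let s be a vertex of P, and let i ≥ 1. Then the point ℓ^{i−1} and the vertex a^i(s) are co-visible, and the point r^{i−1} and the vertex b^i(s) are co-visible. -/

import Mathlib

open Classical Set

noncomputable section

/-- A *double histogram*: an `x`-monotone orthogonal polygon in general position whose
base line lies on the `x`-axis.  It is described by its bottom columns (over the
breakpoints `xs` with depths `d < 0`) and its top columns (over the breakpoints `ys`
with heights `h > 0`).  A *simple histogram* is the special case `n = 1`, where the
upper boundary is the single (base) edge at height `h 0`. -/
structure DoubleHistogram where
  m : ℕ
  n : ℕ
  hm : 0 < m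
  hn : 0 < n
  xs : Fin (m + 1) → ℝ
  ys : Fin (n + 1) → ℝ
  d : Fin m → ℝ
  h : Fin n → ℝ
  xs_mono : StrictMono xs
  ys_mono : StrictMono ys
  left_eq : ys 0 = xs 0
  right_eq : ys (Fin.last n) = xs (Fin.last m)
  d_neg : ∀ i, d i < 0
  h_pos : ∀ j, 0 < h j
  /-- general position: no three vertices on a horizontal line -/
  d_inj : Function.Injective d
  h_inj : Function.Injective h
  /-- general position: no three vertices on a vertical line -/
  gen_pos : ∀ (i : Fin (m + 1)) (j : Fin (n + 1)), xs i = ys j →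
      (i = 0 ∧ j = 0) ∨ (i = Fin.last m ∧ j = Fin.last n)

/-- Among the reals in `A`, the one of minimum absolute value
(i.e. "closest to the base line"). -/
def closestToBase (A : Set ℝ) : ℝ :=
  sSup {y | y ∈ A ∧ ∀ y' ∈ A, |y| ≤ |y'|}

/-- The leftmost point of `S` among those minimizing the distance `|y|` to the base line. -/
def leftmostLowest (S : Set (ℝ × ℝ)) : ℝ × ℝ :=
  (sInf {x | ∃ y, (x, y) ∈ S ∧ ∀ q ∈ S, |y| ≤ |q.2|},
    closestToBase {y | (sInf {x | ∃ y', (x, y') ∈ S ∧ ∀ q ∈ S, |y'| ≤ |q.2|}, y) ∈ S})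

namespace DoubleHistogram

variable (H : DoubleHistogram)

/-- The polygon `P`, as a closed region of the plane. -/
def region : Set (ℝ × ℝ) :=
  (⋃ i : Fin H.m, Icc (H.xs i.castSucc) (H.xs i.succ) ×ˢ Icc (H.d i) 0) ∪
    ⋃ j : Fin H.n, Icc (H.ys j.castSucc) (H.ys j.succ) ×ˢ Icc 0 (H.h j)

/-- The vertex set `V(P)`. -/
def verts : Set (ℝ × ℝ) :=
  (⋃ i : Fin H.m,
      ({(H.xs i.castSucc, H.d i), (H.xs i.succ, H.d i)} : Set (ℝ × ℝ))) ∪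
    ⋃ j : Fin H.n,
      ({(H.ys j.castSucc, H.h j), (H.ys j.succ, H.h j)} : Set (ℝ × ℝ))

/-- `p` and `q` are co-visible: the axis-parallel rectangle they span lies in `P`. -/
def covisible (p q : ℝ × ℝ) : Prop :=
  Icc (min p.1 q.1) (max p.1 q.1) ×ˢ Icc (min p.2 q.2) (max p.2 q.2) ⊆ H.region

lemma covisible_symm {p q : ℝ × ℝ} (hpq : H.covisible p q) : H.covisible q p := by
  unfold covisible at hpq ⊢
  rwa [min_comm q.1 p.1, max_comm q.1 p.1, min_comm q.2 p.2, max_comm q.2 p.2]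

/-- The (unweighted) visibility graph `G(P)` on the vertices of `P`. -/
def visGraph : SimpleGraph ↥H.verts where
  Adj u v := u ≠ v ∧ H.covisible ↑u ↑v
  symm := ⟨fun _ _ hu => ⟨hu.1.symm, H.covisible_symm hu.2⟩⟩
  loopless := ⟨fun _ hu => hu.1 rfl⟩

/-- The closed neighborhood `N(v)`: `v` together with the vertices it sees. -/
def Nbr (v : ℝ × ℝ) : Set (ℝ × ℝ) :=
  {w | w ∈ H.verts ∧ (w = v ∨ H.covisible v w)}

/-- The abscissa where the leftward horizontal ray from `v` hits the boundary of `P`. -/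
def lhit (v : ℝ × ℝ) : ℝ :=
  sInf {x | x ≤ v.1 ∧ Icc x v.1 ×ˢ ({v.2} : Set ℝ) ⊆ H.region}

/-- The abscissa where the rightward horizontal ray from `v` hits the boundary of `P`. -/
def rhit (v : ℝ × ℝ) : ℝ :=
  sSup {x | v.1 ≤ x ∧ Icc v.1 x ×ˢ ({v.2} : Set ℝ) ⊆ H.region}

/-- The `y`-coordinate, among the vertices of `P` with abscissa `x` lying on the same side
of the base line as `side`, of the one closest to the base line (i.e. the endpoint of the
vertical edge at `x` closer to the base line). -/
def nearY (x : ℝ) (side : ℝ) : ℝ :=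
  if side < 0 then sSup {y | y < 0 ∧ (x, y) ∈ H.verts}
  else sInf {y | 0 < y ∧ (x, y) ∈ H.verts}

/-- The left point `ℓ(v)` (double-histogram version): if the leftward ray from `v` hits the
left boundary then the hit point, otherwise the endpoint of the hit vertical edge closer to
the base line. -/
def lpt (v : ℝ × ℝ) : ℝ × ℝ :=
  if H.lhit v = H.xs 0 then (H.xs 0, v.2) else (H.lhit v, H.nearY (H.lhit v) v.2)

/-- The right point `r(v)` (double-histogram version). -/
def rpt (v : ℝ × ℝ) : ℝ × ℝ :=
  if H.rhit v = H.xs (Fin.last H.m) then (H.xs (Fin.last H.m), v.2)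
  else (H.rhit v, H.nearY (H.rhit v) v.2)

/-- The left base vertex (for a simple histogram, i.e. `n = 1`). -/
def baseL : ℝ × ℝ := (H.xs 0, H.h ⟨0, H.hn⟩)

/-- The right base vertex (for a simple histogram, i.e. `n = 1`). -/
def baseR : ℝ × ℝ := (H.xs (Fin.last H.m), H.h ⟨0, H.hn⟩)

/-- The left point `ℓ(v)` (simple-histogram version): if the leftward ray from `v` hits the
left boundary then the left base vertex, otherwise the endpoint of the hit vertical edge
closer to the base edge. -/
def lptS (v : ℝ × ℝ) : ℝ × ℝ :=
  if H.lhit v = H.xs 0 then H.baseL else (H.lhit v, H.nearY (H.lhit v) v.2)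

/-- The right point `r(v)` (simple-histogram version). -/
def rptS (v : ℝ × ℝ) : ℝ × ℝ :=
  if H.rhit v = H.xs (Fin.last H.m) then H.baseR
  else (H.rhit v, H.nearY (H.rhit v) v.2)

/-- The interval `[p, q]`: all vertices of `P` between `p` and `q`. -/
def ivl (p q : ℝ × ℝ) : Set (ℝ × ℝ) :=
  {u | u ∈ H.verts ∧ p.1 ≤ u.1 ∧ u.1 ≤ q.1}

/-- The interval `I(v) = [ℓ(v), r(v)]` of a vertex (double-histogram version). -/
def Iv (v : ℝ × ℝ) : Set (ℝ × ℝ) := H.ivl (H.lpt v) (H.rpt v)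

/-- The interval `I(v) = [ℓ(v), r(v)]` of a vertex (simple-histogram version). -/
def IvS (v : ℝ × ℝ) : Set (ℝ × ℝ) := H.ivl (H.lptS v) (H.rptS v)

/-- The corresponding vertex `cv(v)`: the unique other vertex sharing a horizontal edge
(equivalently, by general position, the `y`-coordinate) with `v`. -/
def cv (v : ℝ × ℝ) : ℝ × ℝ :=
  (sSup {x | (x, v.2) ∈ H.verts ∧ x ≠ v.1}, v.2)

/-- `v` is a left vertex: the left endpoint of its horizontal edge. -/
def IsLeftVert (v : ℝ × ℝ) : Prop :=
  (∃ i : Fin H.m, v = (H.xs i.castSucc, H.d i)) ∨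
    ∃ j : Fin H.n, v = (H.ys j.castSucc, H.h j)

/-- `v` is a right vertex: the right endpoint of its horizontal edge. -/
def IsRightVert (v : ℝ × ℝ) : Prop :=
  (∃ i : Fin H.m, v = (H.xs i.succ, H.d i)) ∨
    ∃ j : Fin H.n, v = (H.ys j.succ, H.h j)

/-- `v` is an `ℓ`-reflex vertex (a left vertex with interior angle `3π/2`). -/
def IsLReflex (v : ℝ × ℝ) : Prop :=
  (∃ i : Fin H.m, ∃ _ : 0 < (i : ℕ),
      v = (H.xs i.castSucc, H.d i) ∧
        H.d ⟨(i : ℕ) - 1, lt_of_le_of_lt (Nat.sub_le _ _) i.isLt⟩ < H.d i) ∨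
    ∃ j : Fin H.n, ∃ _ : 0 < (j : ℕ),
      v = (H.ys j.castSucc, H.h j) ∧
        H.h j < H.h ⟨(j : ℕ) - 1, lt_of_le_of_lt (Nat.sub_le _ _) j.isLt⟩

/-- `v` is an `r`-reflex vertex (a right vertex with interior angle `3π/2`). -/
def IsRReflex (v : ℝ × ℝ) : Prop :=
  (∃ i : Fin H.m, ∃ hi : (i : ℕ) + 1 < H.m,
      v = (H.xs i.succ, H.d i) ∧ H.d ⟨(i : ℕ) + 1, hi⟩ < H.d i) ∨
    ∃ j : Fin H.n, ∃ hj : (j : ℕ) + 1 < H.n,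
      v = (H.ys j.succ, H.h j) ∧ H.h j < H.h ⟨(j : ℕ) + 1, hj⟩

/-- `v` is a reflex vertex. -/
def IsReflex (v : ℝ × ℝ) : Prop := H.IsLReflex v ∨ H.IsRReflex v

/-- The near dominator `nd(s,t)`: for `t` strictly right of `s`, the rightmost vertex of
`N(s)` to the left of `t`, ties broken towards the base line (symmetric otherwise). -/
def nd (s t : ℝ × ℝ) : ℝ × ℝ :=
  if s.1 < t.1 then
    let nx := sSup {x | (∃ y, (x, y) ∈ H.Nbr s) ∧ x ≤ t.1}
    (nx, closestToBase {y | (nx, y) ∈ H.Nbr s})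
  else
    let nx := sInf {x | (∃ y, (x, y) ∈ H.Nbr s) ∧ t.1 ≤ x}
    (nx, closestToBase {y | (nx, y) ∈ H.Nbr s})

/-- The far dominator `fd(s,t)`: for `t` strictly right of `s`, the leftmost vertex of
`N(s)` to the right of `t`, ties broken towards the base line; if there is no such vertex,
the point `r(s)` (symmetric otherwise). -/
def fd (s t : ℝ × ℝ) : ℝ × ℝ :=
  if s.1 < t.1 then
    if ∃ w ∈ H.Nbr s, t.1 ≤ w.1 then
      let nx := sInf {x | (∃ y, (x, y) ∈ H.Nbr s) ∧ t.1 ≤ x}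
      (nx, closestToBase {y | (nx, y) ∈ H.Nbr s})
    else H.rpt s
  else
    if ∃ w ∈ H.Nbr s, w.1 ≤ t.1 then
      let nx := sSup {x | (∃ y, (x, y) ∈ H.Nbr s) ∧ x ≤ t.1}
      (nx, closestToBase {y | (nx, y) ∈ H.Nbr s})
    else H.lpt s

/-- The sequence `a^i(s)`: `a^0(s) = s`, and `a^i(s)` is the leftmost vertex of
`A^i(s) = {v ∈ N(s) : ℓ(v)_x < ℓ(a^{i-1}(s))_x}` (ties towards the base line),
or `a^{i-1}(s)` if `A^i(s)` is empty. -/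
def aSeq (s : ℝ × ℝ) : ℕ → ℝ × ℝ := fun k =>
  Nat.rec (motive := fun _ => ℝ × ℝ) s
    (fun _ prev =>
      let A : Set (ℝ × ℝ) := {v | v ∈ H.Nbr s ∧ (H.lpt v).1 < (H.lpt prev).1}
      if A = ∅ then prev
      else
        let ax := sInf {x | ∃ y, (x, y) ∈ A}
        (ax, closestToBase {y | (ax, y) ∈ A}))
    k

/-- The sequence `b^i(s)`: `b^0(s) = s`, and `b^i(s)` is the rightmost vertex of
`B^i(s) = {v ∈ N(s) : r(v)_x > r(b^{i-1}(s))_x}` (ties towards the base line),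
or `b^{i-1}(s)` if `B^i(s)` is empty. -/
def bSeq (s : ℝ × ℝ) : ℕ → ℝ × ℝ := fun k =>
  Nat.rec (motive := fun _ => ℝ × ℝ) s
    (fun _ prev =>
      let B : Set (ℝ × ℝ) := {v | v ∈ H.Nbr s ∧ (H.rpt prev).1 < (H.rpt v).1}
      if B = ∅ then prev
      else
        let bx := sSup {x | ∃ y, (x, y) ∈ B}
        (bx, closestToBase {y | (bx, y) ∈ B}))
    k

/-- The pair of the `k`-th bottom dominator `bd^k(s)` and `k`-th top dominator `td^k(s)`:
`bd^0(s) = td^0(s) = s`; for `k > 0`, with `I^k(s) = I(bd^{k-1}(s)) ∪ I(td^{k-1}(s))`,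
`bd^k(s)` is the leftmost vertex of `I^k(s)⁻` minimizing the distance to the base line,
and `td^k(s)` the leftmost vertex of `I^k(s)⁺` minimizing the distance to the base line;
if one of the two sets is empty, the corresponding dominator equals the other one. -/
def bdtd (s : ℝ × ℝ) : ℕ → (ℝ × ℝ) × (ℝ × ℝ) := fun k =>
  Nat.rec (motive := fun _ => (ℝ × ℝ) × (ℝ × ℝ)) (s, s)
    (fun _ p =>
      let J : Set (ℝ × ℝ) := H.Iv p.1 ∪ H.Iv p.2
      let Jm : Set (ℝ × ℝ) := {v | v ∈ J ∧ v.2 < 0}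
      let Jp : Set (ℝ × ℝ) := {v | v ∈ J ∧ 0 < v.2}
      if Jm = ∅ then (leftmostLowest Jp, leftmostLowest Jp)
      else if Jp = ∅ then (leftmostLowest Jm, leftmostLowest Jm)
      else (leftmostLowest Jm, leftmostLowest Jp))
    k

/-- The `k`-th interval `I^k(s)`: `I^0(s) = {s}` and
`I^{k+1}(s) = I(bd^k(s)) ∪ I(td^k(s))`. -/
def Ipow (s : ℝ × ℝ) : ℕ → Set (ℝ × ℝ) := fun k =>
  Nat.rec (motive := fun _ => Set (ℝ × ℝ)) {s}
    (fun k _ => H.Iv (H.bdtd s k).1 ∪ H.Iv (H.bdtd s k).2) k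

/-- `w` lies on a shortest path from `s` to `t` in the visibility graph. -/
def OnShortestPath (s t w : ↥H.verts) : Prop :=
  ∃ p : H.visGraph.Walk s t, p.length = H.visGraph.dist s t ∧ w ∈ p.support

end DoubleHistogram

/-- A routing scheme for a graph `G`: every vertex carries a binary label and a binary
routing table, and the routing function maps (link table of the current vertex, routing
table of the current vertex, label of the target, current header) to the next vertex
together with the new header. -/
structure RoutingScheme {V : Type} (G : SimpleGraph V) where
  lab : V → List Bool
  tab : V → List Bool
  route : Set (List Bool) → List Bool → List Bool → List Bool → V × List Bool

namespace RoutingScheme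

variable {V : Type} {G : SimpleGraph V} (R : RoutingScheme G)

/-- One routing step at vertex `p` with header `h`, towards the target `t`: the routing
function is applied to the link table of `p` (the labels of its closed neighborhood),
the routing table of `p`, the label of `t` and the header `h`. -/
def step (t p : V) (h : List Bool) : V × List Bool :=
  R.route (R.lab '' {w | w = p ∨ G.Adj p w}) (R.tab p) (R.lab t) h

/-- The routing sequence from `s` towards `t`, starting with the empty header. -/
def seq (s t : V) : ℕ → V × List Bool := fun k =>
  Nat.rec (motive := fun _ => V × List Bool) (s, ([] : List Bool))
    (fun _ q => R.step t q.1 q.2) k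

end RoutingScheme

namespace DoubleHistogram

variable {H : DoubleHistogram}

/-! ### Basic region lemmas -/

lemma mem_region_iff {p : ℝ × ℝ} :
    p ∈ H.region ↔
      (∃ i : Fin H.m, (H.xs i.castSucc ≤ p.1 ∧ p.1 ≤ H.xs i.succ) ∧ H.d i ≤ p.2 ∧ p.2 ≤ 0) ∨
      (∃ j : Fin H.n, (H.ys j.castSucc ≤ p.1 ∧ p.1 ≤ H.ys j.succ) ∧ 0 ≤ p.2 ∧ p.2 ≤ H.h j) := by
  simp only [region, Set.mem_union, Set.mem_iUnion, Set.mem_prod, Set.mem_Icc, and_assoc]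

lemma mem_region_top {x y : ℝ} {j : Fin H.n} (h1 : H.ys j.castSucc ≤ x) (h2 : x ≤ H.ys j.succ)
    (h3 : 0 ≤ y) (h4 : y ≤ H.h j) : (x, y) ∈ H.region :=
  mem_region_iff.2 (Or.inr ⟨j, ⟨h1, h2⟩, h3, h4⟩)

lemma x_bounds_of_mem {p : ℝ × ℝ} (hp : p ∈ H.region) :
    H.xs 0 ≤ p.1 ∧ p.1 ≤ H.xs (Fin.last H.m) := by
  rcases mem_region_iff.1 hp with ⟨i, ⟨h1, h2⟩, -⟩ | ⟨j, ⟨h1, h2⟩, -⟩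
  · exact ⟨le_trans (H.xs_mono.monotone (Fin.zero_le _)) h1,
      le_trans h2 (H.xs_mono.monotone (Fin.le_last _))⟩
  · refine ⟨?_, ?_⟩
    · calc H.xs 0 = H.ys 0 := H.left_eq.symm
        _ ≤ H.ys j.castSucc := H.ys_mono.monotone (Fin.zero_le _)
        _ ≤ p.1 := h1
    · calc p.1 ≤ H.ys j.succ := h2
        _ ≤ H.ys (Fin.last H.n) := H.ys_mono.monotone (Fin.le_last _)
        _ = H.xs (Fin.last H.m) := H.right_eq

lemma shrink {x y y' : ℝ} (hm : (x, y) ∈ H.region)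
    (hy : (0 ≤ y' ∧ y' ≤ y) ∨ (y ≤ y' ∧ y' ≤ 0)) : (x, y') ∈ H.region := by
  rcases mem_region_iff.1 hm with ⟨i, hx, hyy⟩ | ⟨j, hx, hyy⟩
  · refine mem_region_iff.2 (Or.inl ⟨i, hx, ?_, ?_⟩) <;>
      rcases hy with ⟨h1, h2⟩ | ⟨h1, h2⟩ <;> simp only at * <;> nlinarith [H.d_neg i]
  · refine mem_region_iff.2 (Or.inr ⟨j, hx, ?_, ?_⟩) <;>
      rcases hy with ⟨h1, h2⟩ | ⟨h1, h2⟩ <;> simp only at * <;> nlinarith [H.h_pos j]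

lemma covisible_of_segments {p q : ℝ × ℝ}
    (hseg : ∀ x ∈ Icc (min p.1 q.1) (max p.1 q.1),
      (x, p.2) ∈ H.region ∧ (x, q.2) ∈ H.region) : H.covisible p q := by
  rintro ⟨x, y⟩ ⟨hx, hy⟩
  simp only [Set.mem_Icc] at hy
  obtain ⟨hp, hq⟩ := hseg x hx
  rcases le_total 0 y with h0 | h0
  · rcases le_total p.2 q.2 with h2 | h2
    · exact shrink hq (Or.inl ⟨h0, by rw [max_eq_right h2] at hy; exact hy.2⟩)
    · exact shrink hp (Or.inl ⟨h0, by rw [max_eq_left h2] at hy; exact hy.2⟩)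
  · rcases le_total p.2 q.2 with h2 | h2
    · exact shrink hp (Or.inr ⟨by rw [min_eq_left h2] at hy; exact hy.1, h0⟩)
    · exact shrink hq (Or.inr ⟨by rw [min_eq_right h2] at hy; exact hy.1, h0⟩)

lemma segments_of_covisible {p q : ℝ × ℝ} (hc : H.covisible p q) :
    ∀ x ∈ Icc (min p.1 q.1) (max p.1 q.1),
      (x, p.2) ∈ H.region ∧ (x, q.2) ∈ H.region := by
  intro x hx
  constructor
  · exact hc ⟨hx, Set.mem_Icc.2 ⟨min_le_left _ _, le_max_left _ _⟩⟩
  · exact hc ⟨hx, Set.mem_Icc.2 ⟨min_le_right _ _, le_max_right _ _⟩⟩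

lemma covisible_self {p : ℝ × ℝ} (hp : p ∈ H.region) : H.covisible p p := by
  rintro ⟨x, y⟩ ⟨hx, hy⟩
  simp only [min_self, max_self, Set.Icc_self, Set.mem_singleton_iff] at hx hy
  rw [hx, hy]; exact hp

lemma verts_subset_region : H.verts ⊆ H.region := by
  rintro v hv
  simp only [verts, Set.mem_union, Set.mem_iUnion, Set.mem_insert_iff,
    Set.mem_singleton_iff] at hv
  rcases hv with ⟨i, rfl | rfl⟩ | ⟨j, rfl | rfl⟩
  · exact mem_region_iff.2 (Or.inl ⟨i, ⟨le_refl _, (H.xs_mono (Fin.castSucc_lt_succ (i := i))).le⟩,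
      le_refl _, (H.d_neg i).le⟩)
  · exact mem_region_iff.2 (Or.inl ⟨i, ⟨(H.xs_mono (Fin.castSucc_lt_succ (i := i))).le, le_refl _⟩,
      le_refl _, (H.d_neg i).le⟩)
  · exact mem_region_top (le_refl _) (H.ys_mono (Fin.castSucc_lt_succ (i := j))).le (H.h_pos j).le
      (le_refl _)
  · exact mem_region_top (H.ys_mono (Fin.castSucc_lt_succ (i := j))).le (le_refl _) (H.h_pos j).le
      (le_refl _)

lemma verts_finite : H.verts.Finite := by
  apply Set.Finite.union <;>
    exact Set.finite_iUnion fun i => (Set.finite_singleton _).insert _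

lemma isClosed_region : IsClosed H.region := by
  apply IsClosed.union <;>
    exact isClosed_iUnion_of_finite fun i => IsClosed.prod isClosed_Icc isClosed_Icc


/-! ### lhit lemmas -/

lemma mem_lhit_set_self {v : ℝ × ℝ} (hv : v ∈ H.region) :
    v.1 ∈ {x | x ≤ v.1 ∧ Icc x v.1 ×ˢ ({v.2} : Set ℝ) ⊆ H.region} := by
  refine ⟨le_refl _, ?_⟩
  rintro ⟨x, y⟩ ⟨hx, hy⟩
  simp only [Set.Icc_self, Set.mem_singleton_iff] at hx hy
  rw [hx, hy]; exact hv

lemma lhit_set_lb {v : ℝ × ℝ} :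
    ∀ x ∈ {x | x ≤ v.1 ∧ Icc x v.1 ×ˢ ({v.2} : Set ℝ) ⊆ H.region}, H.xs 0 ≤ x := by
  rintro x ⟨h1, h2⟩
  have : (x, v.2) ∈ H.region := h2 ⟨Set.mem_Icc.2 ⟨le_refl _, h1⟩, rfl⟩
  exact (x_bounds_of_mem this).1

lemma lhit_le {v : ℝ × ℝ} (hv : v ∈ H.region) : H.lhit v ≤ v.1 :=
  csInf_le ⟨H.xs 0, lhit_set_lb⟩ (mem_lhit_set_self hv)

lemma lhit_ge {v : ℝ × ℝ} (hv : v ∈ H.region) : H.xs 0 ≤ H.lhit v :=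
  le_csInf ⟨v.1, mem_lhit_set_self hv⟩ lhit_set_lb

lemma lhit_segment {v : ℝ × ℝ} (hv : v ∈ H.region) :
    ∀ x, H.lhit v ≤ x → x ≤ v.1 → (x, v.2) ∈ H.region := by
  have hslice : IsClosed {x : ℝ | (x, v.2) ∈ H.region} :=
    isClosed_region.preimage (Continuous.prodMk continuous_id continuous_const)
  intro x h1 h2
  rcases eq_or_lt_of_le (lhit_le hv) with heq | hlt
  · have : x = v.1 := le_antisymm h2 (heq ▸ h1)
    rw [this]; exact hv
  · have hIoc : Ioc (H.lhit v) v.1 ⊆ {x : ℝ | (x, v.2) ∈ H.region} := by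
      intro x' hx'
      obtain ⟨a, ha, hax⟩ := exists_lt_of_csInf_lt ⟨v.1, mem_lhit_set_self hv⟩ hx'.1
      exact ha.2 ⟨Set.mem_Icc.2 ⟨hax.le, hx'.2⟩, rfl⟩
    have : Icc (H.lhit v) v.1 ⊆ {x : ℝ | (x, v.2) ∈ H.region} := by
      rw [← closure_Ioc hlt.ne]
      exact closure_minimal hIoc hslice
    exact this ⟨h1, h2⟩

lemma lhit_min {v : ℝ × ℝ} (c : ℝ) (hc : c ≤ v.1)
    (hcov : ∀ x, c ≤ x → x ≤ v.1 → (x, v.2) ∈ H.region) : H.lhit v ≤ c := by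
  refine csInf_le ⟨H.xs 0, lhit_set_lb⟩ ⟨hc, ?_⟩
  rintro ⟨x, y⟩ ⟨hx, hy⟩
  simp only [Set.mem_singleton_iff] at hy
  rw [hy]; exact hcov x hx.1 hx.2

lemma lpt_fst {v : ℝ × ℝ} : (H.lpt v).1 = H.lhit v := by
  unfold lpt; split_ifs with h
  · exact h.symm
  · rfl

/-! ### columns -/

lemma exists_col {x : ℝ} (h1 : H.ys 0 < x) (h2 : x ≤ H.ys (Fin.last H.n)) :
    ∃ j : Fin H.n, H.ys j.castSucc < x ∧ x ≤ H.ys j.succ := by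
  classical
  set T : Finset (Fin (H.n + 1)) := Finset.univ.filter (fun k => H.ys k < x) with hT
  have hTne : T.Nonempty := ⟨0, by simp [hT, h1]⟩
  set k := T.max' hTne with hk
  have hkmem : k ∈ T := T.max'_mem hTne
  have hkx : H.ys k < x := by simpa [hT] using hkmem
  have hklt : (k : ℕ) < H.n := by
    rcases lt_or_eq_of_le (Nat.lt_succ_iff.1 k.isLt) with h | h
    · exact h
    · exfalso
      have : k = Fin.last H.n := Fin.ext h
      rw [this] at hkx; linarith
  refine ⟨⟨k, hklt⟩, ?_, ?_⟩
  · have : (⟨k, hklt⟩ : Fin H.n).castSucc = k := Fin.ext rfl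
    rw [this]; exact hkx
  · by_contra hcon
    push_neg at hcon
    have hmem : (⟨k, hklt⟩ : Fin H.n).succ ∈ T := by
      simp only [hT, Finset.mem_filter]
      exact ⟨Finset.mem_univ _, hcon⟩
    have := T.le_max' _ hmem
    rw [← hk] at this
    have : (k : ℕ) + 1 ≤ (k : ℕ) := this
    omega

lemma top_bound {x y : ℝ} (hm : (x, y) ∈ H.region) (hy : 0 < y) {j : Fin H.n}
    (h1 : H.ys j.castSucc < x) (h2 : x < H.ys j.succ) : y ≤ H.h j := by
  rcases mem_region_iff.1 hm with ⟨i, -, -, h4⟩ | ⟨j', ⟨h3, h4⟩, -, h6⟩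
  · linarith
  rcases lt_trichotomy j' j with hlt | heq | hgt
  · have : H.ys j'.succ ≤ H.ys j.castSucc :=
      H.ys_mono.monotone (by simpa using Fin.succ_le_castSucc_iff.2 hlt)
    linarith
  · rw [← heq]; exact h6
  · have : H.ys j.succ ≤ H.ys j'.castSucc :=
      H.ys_mono.monotone (by simpa using Fin.succ_le_castSucc_iff.2 hgt)
    linarith

/-! ### structure at the left hit point -/

lemma lhit_struct {v : ℝ × ℝ} (hv : v ∈ H.region) (h2 : 0 < v.2)
    (hx0 : H.xs 0 < H.lhit v) :
    ∃ a b : Fin H.n, (a : ℕ) + 1 = (b : ℕ) ∧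
      H.lhit v = H.ys b.castSucc ∧ H.lhit v = H.ys a.succ ∧
      H.h a < v.2 ∧ v.2 ≤ H.h b ∧ H.nearY (H.lhit v) v.2 = H.h a := by
  have hmem : (H.lhit v, v.2) ∈ H.region := lhit_segment hv _ (le_refl _) (lhit_le hv)
  rcases mem_region_iff.1 hmem with ⟨i, -, -, h4⟩ | ⟨b, ⟨h3, h4⟩, -, h6⟩
  · simp only at h4; linarith
  simp only at h3 h4 h6
  -- lhit v = ys b.castSucc
  have hbeq : H.lhit v = H.ys b.castSucc := by
    rcases eq_or_lt_of_le h3 with heq | hlt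
    · exact heq.symm
    · exfalso
      have hmin := lhit_min (H := H) (v := v) (H.ys b.castSucc)
        (le_trans (le_trans h3 (lhit_le hv)) (le_refl _)) ?_
      · linarith
      · intro x hx1 hx2
        rcases le_total x (H.lhit v) with hle | hge
        · exact mem_region_top hx1 (le_trans hle h4) h2.le h6
        · exact lhit_segment hv x hge hx2
  -- b.castSucc ≠ 0
  have hbne : (b : ℕ) ≠ 0 := by
    intro hb0
    have : b.castSucc = (0 : Fin (H.n + 1)) := Fin.ext hb0
    rw [this, H.left_eq] at hbeq
    linarith
  set a : Fin H.n := ⟨(b : ℕ) - 1, lt_trans (by omega) b.isLt⟩ with ha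
  have hab : (a : ℕ) + 1 = (b : ℕ) := by simp [ha]; omega
  have haeq : H.lhit v = H.ys a.succ := by
    rw [hbeq]; congr 1; exact Fin.ext (by simp [Fin.val_succ, hab])
  have halt : H.ys a.castSucc < H.lhit v := by
    rw [haeq]; exact H.ys_mono (Fin.castSucc_lt_succ (i := a))
  -- h a < v.2
  have hha : H.h a < v.2 := by
    by_contra hcon
    push_neg at hcon
    have hmin := lhit_min (H := H) (v := v) (H.ys a.castSucc)
      (le_trans halt.le (lhit_le hv)) ?_
    · linarith
    · intro x hx1 hx2
      rcases le_total x (H.lhit v) with hle | hge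
      · exact mem_region_top hx1 (haeq ▸ hle) h2.le hcon
      · exact lhit_segment hv x hge hx2
  -- nearY
  have hE : {y | 0 < y ∧ (H.lhit v, y) ∈ H.verts} = {H.h a, H.h b} := by
    ext y
    simp only [Set.mem_setOf_eq, Set.mem_insert_iff, Set.mem_singleton_iff]
    constructor
    · rintro ⟨hy0, hyv⟩
      simp only [verts, Set.mem_union, Set.mem_iUnion, Set.mem_insert_iff,
        Set.mem_singleton_iff, Prod.mk.injEq] at hyv
      rcases hyv with ⟨i, ⟨-, hdy⟩ | ⟨-, hdy⟩⟩ | ⟨j, ⟨hx, hy⟩ | ⟨hx, hy⟩⟩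
      · exfalso; rw [hdy] at hy0; exact absurd hy0 (not_lt.2 (H.d_neg i).le)
      · exfalso; rw [hdy] at hy0; exact absurd hy0 (not_lt.2 (H.d_neg i).le)
      · right
        have : j.castSucc = b.castSucc := H.ys_mono.injective (by rw [← hx, ← hbeq])
        have : j = b := Fin.castSucc_injective _ this
        rw [hy, this]
      · left
        have : j.succ = a.succ := H.ys_mono.injective (by rw [← hx, ← haeq])
        have : j = a := Fin.succ_injective _ this
        rw [hy, this]
    · rintro (rfl | rfl)
      · refine ⟨H.h_pos a, ?_⟩
        rw [haeq]
        simp only [verts, Set.mem_union, Set.mem_iUnion, Set.mem_insert_iff,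
          Set.mem_singleton_iff]
        exact Or.inr ⟨a, Or.inr rfl⟩
      · refine ⟨H.h_pos b, ?_⟩
        rw [hbeq]
        simp only [verts, Set.mem_union, Set.mem_iUnion, Set.mem_insert_iff,
          Set.mem_singleton_iff]
        exact Or.inr ⟨b, Or.inl rfl⟩
  have hnear : H.nearY (H.lhit v) v.2 = H.h a := by
    unfold nearY
    rw [if_neg (not_lt.2 h2.le), hE, csInf_pair]
    exact min_eq_left (le_trans hha.le h6)
  exact ⟨a, b, hab, hbeq, haeq, hha, h6, hnear⟩


/-! ### attainment of the choice in `aSeq` -/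

lemma choice_mem {A : Set (ℝ × ℝ)} (hfin : A.Finite) (hne : A.Nonempty) :
    (sInf {x | ∃ y, (x, y) ∈ A}, closestToBase {y | (sInf {x | ∃ y, (x, y) ∈ A}, y) ∈ A}) ∈ A ∧
      ∀ w ∈ A, sInf {x | ∃ y, (x, y) ∈ A} ≤ w.1 := by
  have hX : {x | ∃ y, (x, y) ∈ A} = Prod.fst '' A := by
    ext x
    constructor
    · rintro ⟨y, hy⟩; exact ⟨(x, y), hy, rfl⟩
    · rintro ⟨⟨x', y⟩, hp, rfl⟩; exact ⟨y, hp⟩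
  have hXfin : {x | ∃ y, (x, y) ∈ A}.Finite := hX ▸ hfin.image _
  have hXne : {x | ∃ y, (x, y) ∈ A}.Nonempty := by
    obtain ⟨⟨x, y⟩, hp⟩ := hne; exact ⟨x, y, hp⟩
  set ax := sInf {x | ∃ y, (x, y) ∈ A} with hax
  have haxmem : ax ∈ {x | ∃ y, (x, y) ∈ A} := hXne.csInf_mem hXfin
  obtain ⟨y0, hy0⟩ := haxmem
  set Y := {y | (ax, y) ∈ A} with hY
  have hYne : Y.Nonempty := ⟨y0, hy0⟩
  have hYfin : Y.Finite := by
    have : Y = (fun y => (ax, y)) ⁻¹' A := rfl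
    rw [this]
    exact Set.Finite.preimage (fun a _ b _ hab => (Prod.mk.injEq _ _ _ _ ▸ hab).2) hfin
  constructor
  · set MM := {y | y ∈ Y ∧ ∀ y' ∈ Y, |y| ≤ |y'|} with hMM
    have hMMne : MM.Nonempty := by
      obtain ⟨ym, hym, hmin⟩ := Set.exists_min_image Y (fun y => |y|) hYfin hYne
      exact ⟨ym, hym, hmin⟩
    have hMMfin : MM.Finite := hYfin.subset fun y hy => hy.1
    have : closestToBase Y ∈ MM := hMMne.csSup_mem hMMfin
    exact this.1
  · intro w hw
    refine csInf_le ?_ ⟨w.2, hw⟩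
    obtain ⟨c, hc⟩ := hXfin.bddBelow
    exact ⟨c, hc⟩

/-! ### the key geometric lemma (top version) -/

lemma sees_L {s prev v : ℝ × ℝ}
    (hsR : s ∈ H.region) (hprevR : prev ∈ H.region) (hvR : v ∈ H.region)
    (h2 : 0 < prev.2)
    (hsp : H.covisible s prev) (hsv : H.covisible s v)
    (hs1 : H.lhit prev ≤ s.1)
    (hlt : H.lhit v < H.lhit prev)
    (hmin : ∀ w, w ∈ H.verts → H.covisible s w → H.lhit w < H.lhit prev → v.1 ≤ w.1)
    (hcase : prev.1 ≤ v.1 ∨ prev = s) :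
    H.covisible (H.lpt prev) v := by
  have hx0lx : H.xs 0 < H.lhit prev := lt_of_le_of_lt (lhit_ge hvR) hlt
  obtain ⟨a, b, hab, hbeq, haeq, hha, hhb, hnear⟩ := lhit_struct hprevR h2 hx0lx
  set lx := H.lhit prev with hlxdef
  set Ly := H.h a with hLydef
  have hLy0 : 0 < Ly := H.h_pos a
  have hLyp : Ly < prev.2 := hha
  have hlpt : H.lpt prev = (lx, Ly) := by
    unfold lpt
    rw [if_neg hx0lx.ne', hnear]
  have halt : H.ys a.castSucc < lx := by
    rw [haeq]; exact H.ys_mono (Fin.castSucc_lt_succ (i := a))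
  set M := max prev.1 s.1 with hMdef
  have hlxp1 : lx ≤ prev.1 := lhit_le hprevR
  have hlxM : lx ≤ M := le_trans hlxp1 (le_max_left _ _)
  have hs1M : s.1 ≤ M := le_max_right _ _
  have Cov0 : ∀ x, lx ≤ x → x ≤ M → (x, prev.2) ∈ H.region := by
    intro x hx1 hx2
    rcases le_total x prev.1 with h | h
    · exact lhit_segment hprevR x hx1 h
    · rcases le_total s.1 prev.1 with hh | hh
      · exact lhit_segment hprevR x hx1 (le_trans hx2 (max_le (le_refl _) hh))
      · refine (segments_of_covisible hsp x ⟨?_, ?_⟩).2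
        · exact le_trans (min_le_right _ _) h
        · exact le_trans hx2 (max_le (le_max_right _ _) (le_max_left _ _))
  have CovL : ∀ x, lx ≤ x → x ≤ M → (x, Ly) ∈ H.region := fun x hx1 hx2 =>
    shrink (Cov0 x hx1 hx2) (Or.inl ⟨hLy0.le, hLyp.le⟩)
  rcases lt_or_ge v.1 lx with hB | hA
  · -- v is strictly left of the left point: then prev = s
    have hps : prev = s := by
      rcases hcase with h | h
      · exact absurd (le_trans hlxp1 h) (not_le.2 hB)
      · exact h
    rw [hlpt]
    apply covisible_of_segments
    intro x hx
    simp only [Set.mem_Icc] at hx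
    have hxv : v.1 ≤ x := le_trans (le_of_eq (min_eq_right hB.le).symm) hx.1
    have hxlx : x ≤ lx := le_trans hx.2 (le_of_eq (max_eq_left hB.le))
    have hs1v : v.1 ≤ s.1 := le_trans hB.le hs1
    have hseg := segments_of_covisible hsv x
      ⟨le_trans (min_le_right _ _) hxv, le_trans (le_trans hxlx hs1) (le_max_left _ _)⟩
    refine ⟨?_, hseg.2⟩
    exact shrink hseg.1 (Or.inl ⟨hLy0.le, by rw [← hps]; exact hLyp.le⟩)
  · -- main case: lx ≤ v.1
    rw [hlpt]
    apply covisible_of_segments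
    intro x hx
    simp only [Set.mem_Icc, min_eq_left hA, max_eq_right hA] at hx
    obtain ⟨hx1, hx2⟩ := hx
    refine ⟨?_, lhit_segment hvR x (le_trans hlt.le hx1) hx2⟩
    rcases le_total x M with hxM | hMx
    · exact CovL x hx1 hxM
    · rcases eq_or_lt_of_le hMx with heq | hMlt
      · exact CovL x hx1 (le_of_eq heq.symm)
      by_contra hnot
      have hxlast : x ≤ H.ys (Fin.last H.n) := by
        rw [H.right_eq]; exact le_trans hx2 (x_bounds_of_mem hvR).2
      have hys0x : H.ys 0 < x := by
        rw [H.left_eq]; exact lt_of_lt_of_le hx0lx hx1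
      obtain ⟨j0, hj01, hj02⟩ := exists_col hys0x hxlast
      have hj0h : H.h j0 < Ly := by
        by_contra hcon; push_neg at hcon
        exact hnot (mem_region_top hj01.le hj02 hLy0.le hcon)
      set S : Finset (Fin H.n) := Finset.univ.filter
        (fun j => H.h j < Ly ∧ H.ys j.castSucc < v.1 ∧ lx < H.ys j.succ) with hSdef
      have hj0S : j0 ∈ S := by
        simp only [hSdef, Finset.mem_filter, Finset.mem_univ, true_and]
        exact ⟨hj0h, lt_of_lt_of_le hj01 hx2,
          lt_of_le_of_lt hlxM (lt_of_lt_of_le hMlt hj02)⟩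
      obtain ⟨js, hjsS, hjsmin⟩ := S.exists_min_image (fun j => H.h j) ⟨j0, hj0S⟩
      have hjs : H.h js < Ly ∧ H.ys js.castSucc < v.1 ∧ lx < H.ys js.succ := by
        simpa only [hSdef, Finset.mem_filter, Finset.mem_univ, true_and] using hjsS
      obtain ⟨hjsh, hjsv, hjslx⟩ := hjs
      set u : ℝ × ℝ := (H.ys js.castSucc, H.h js) with hudef
      have huverts : u ∈ H.verts := by
        simp only [verts, Set.mem_union, Set.mem_iUnion, Set.mem_insert_iff,
          Set.mem_singleton_iff]
        exact Or.inr ⟨js, Or.inl rfl⟩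
      have hP1 : lx ≤ H.ys js.castSucc := by
        by_contra hcon; push_neg at hcon
        rw [hbeq] at hcon
        have hjsb : js < b := by
          have := H.ys_mono.lt_iff_lt.1 hcon
          simpa using this
        have : H.ys js.succ ≤ H.ys b.castSucc :=
          H.ys_mono.monotone (Fin.succ_le_castSucc_iff.2 hjsb)
        rw [← hbeq] at this
        linarith
      have hP2 : M ≤ H.ys js.castSucc := by
        by_contra hcon; push_neg at hcon
        rcases le_or_gt (H.ys js.succ) M with hle | hlt2
        · set x' := (H.ys js.castSucc + H.ys js.succ) / 2 with hx'def
          have hcs : H.ys js.castSucc < H.ys js.succ := H.ys_mono (Fin.castSucc_lt_succ (i := js))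
          have h1a : H.ys js.castSucc < x' := by rw [hx'def]; linarith
          have h1b : x' < H.ys js.succ := by rw [hx'def]; linarith
          have := top_bound (Cov0 x' (le_trans hP1 h1a.le) (le_trans h1b.le hle)) h2 h1a h1b
          linarith
        · have := top_bound (Cov0 M hlxM (le_refl _)) h2 hcon hlt2
          linarith
      have CovU : ∀ x', s.1 ≤ x' → x' ≤ H.ys js.castSucc → (x', H.h js) ∈ H.region := by
        intro x' hx'1 hx'2
        rcases le_or_gt x' M with hle | hge
        · exact shrink (Cov0 x' (le_trans hs1 hx'1) hle)
            (Or.inl ⟨(H.h_pos js).le, by linarith⟩)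
        · have hx'last : x' ≤ H.ys (Fin.last H.n) := by
            rw [H.right_eq]
            exact le_trans hx'2 (le_trans hjsv.le (x_bounds_of_mem hvR).2)
          have hx'0 : H.ys 0 < x' := by
            rw [H.left_eq]; exact lt_of_lt_of_le hx0lx (le_trans hlxM hge.le)
          obtain ⟨j', hj'1, hj'2⟩ := exists_col hx'0 hx'last
          rcases le_or_gt Ly (H.h j') with hcase2 | hcase2
          · exact mem_region_top hj'1.le hj'2 (H.h_pos js).le (le_trans hjsh.le hcase2)
          · have hj'S : j' ∈ S := by
              simp only [hSdef, Finset.mem_filter, Finset.mem_univ, true_and]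
              exact ⟨hcase2, lt_of_lt_of_le hj'1 (le_trans hx'2 hjsv.le),
                lt_of_le_of_lt hlxM (lt_of_lt_of_le hge hj'2)⟩
            exact mem_region_top hj'1.le hj'2 (H.h_pos js).le (hjsmin j' hj'S)
      have hsu : H.covisible s u := by
        apply covisible_of_segments
        intro x' hx'
        have hmin' : min s.1 u.1 = s.1 := min_eq_left (le_trans hs1M hP2)
        have hmax' : max s.1 u.1 = u.1 := max_eq_right (le_trans hs1M hP2)
        rw [hmin', hmax'] at hx'
        simp only [Set.mem_Icc] at hx'
        refine ⟨?_, CovU x' hx'.1 hx'.2⟩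
        have hs1v : s.1 ≤ v.1 := le_trans hs1M (le_trans hMlt.le hx2)
        refine (segments_of_covisible hsv x' ⟨?_, ?_⟩).1
        · exact le_trans (min_le_left _ _) hx'.1
        · exact le_trans (le_trans hx'.2 hjsv.le) (le_max_right _ _)
      have hP5 : H.lhit u < lx := by
        have hcle : H.ys a.castSucc ≤ u.1 := le_trans halt.le hP1
        have hstep : H.lhit u ≤ H.ys a.castSucc := by
          apply lhit_min _ hcle
          intro x' hx'1 hx'2
          rcases le_total x' lx with h | h
          · exact mem_region_top hx'1 (by rw [← haeq]; exact h) (H.h_pos js).le hjsh.le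
          · rcases le_total x' M with hh | hh
            · exact shrink (Cov0 x' h hh) (Or.inl ⟨(H.h_pos js).le, by linarith⟩)
            · exact CovU x' (le_trans hs1M hh) hx'2
        exact lt_of_le_of_lt hstep halt
      have := hmin u huverts hsu hP5
      have : v.1 ≤ H.ys js.castSucc := this
      linarith


/-! ### the easy case: a vertex sees its own left point -/

lemma sees_own_L {prev : ℝ × ℝ} (hp : prev ∈ H.region) (h2 : 0 < prev.2) :
    H.covisible (H.lpt prev) prev := by
  by_cases h0 : H.lhit prev = H.xs 0
  · unfold lpt
    rw [if_pos h0]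
    apply covisible_of_segments
    intro x hx
    simp only [Set.mem_Icc] at hx
    have hle : H.xs 0 ≤ prev.1 := h0 ▸ lhit_le hp
    rw [min_eq_left hle, max_eq_right hle] at hx
    have : (x, prev.2) ∈ H.region := lhit_segment hp x (h0 ▸ hx.1) hx.2
    exact ⟨this, this⟩
  · have hx0 : H.xs 0 < H.lhit prev := lt_of_le_of_ne (lhit_ge hp) (Ne.symm h0)
    obtain ⟨a, b, hab, hbeq, haeq, hha, hhb, hnear⟩ := lhit_struct hp h2 hx0
    unfold lpt
    rw [if_neg h0, hnear]
    apply covisible_of_segments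
    intro x hx
    simp only [Set.mem_Icc] at hx
    rw [min_eq_left (lhit_le hp), max_eq_right (lhit_le hp)] at hx
    have hreg : (x, prev.2) ∈ H.region := lhit_segment hp x hx.1 hx.2
    exact ⟨shrink hreg (Or.inl ⟨(H.h_pos a).le, hha.le⟩), hreg⟩

/-! ### aSeq lemmas -/

lemma aSeq_zero (s : ℝ × ℝ) : H.aSeq s 0 = s := rfl

lemma aSeq_succ_def (s : ℝ × ℝ) (k : ℕ) :
    H.aSeq s (k + 1) =
      (if {v | v ∈ H.Nbr s ∧ H.lhit v < H.lhit (H.aSeq s k)} = ∅ then H.aSeq s k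
       else
        (sInf {x | ∃ y, (x, y) ∈ {v | v ∈ H.Nbr s ∧ H.lhit v < H.lhit (H.aSeq s k)}},
          closestToBase {y |
            (sInf {x | ∃ y, (x, y) ∈ {v | v ∈ H.Nbr s ∧ H.lhit v < H.lhit (H.aSeq s k)}}, y) ∈
              {v | v ∈ H.Nbr s ∧ H.lhit v < H.lhit (H.aSeq s k)}})) := by
  have hset : {v : ℝ × ℝ | v ∈ H.Nbr s ∧ (H.lpt v).1 < (H.lpt (H.aSeq s k)).1} =
      {v | v ∈ H.Nbr s ∧ H.lhit v < H.lhit (H.aSeq s k)} := by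
    ext w
    simp only [Set.mem_setOf_eq, lpt_fst]
  show (if {v : ℝ × ℝ | v ∈ H.Nbr s ∧ (H.lpt v).1 < (H.lpt (H.aSeq s k)).1} = ∅
      then H.aSeq s k
      else
        (sInf {x | ∃ y, (x, y) ∈ {v : ℝ × ℝ | v ∈ H.Nbr s ∧ (H.lpt v).1 < (H.lpt (H.aSeq s k)).1}},
          closestToBase {y |
            (sInf {x | ∃ y, (x, y) ∈
                {v : ℝ × ℝ | v ∈ H.Nbr s ∧ (H.lpt v).1 < (H.lpt (H.aSeq s k)).1}}, y) ∈
              {v : ℝ × ℝ | v ∈ H.Nbr s ∧ (H.lpt v).1 < (H.lpt (H.aSeq s k)).1}})) = _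
  rw [hset]

lemma nbr_subset_verts {s : ℝ × ℝ} : H.Nbr s ⊆ H.verts := fun _ hw => hw.1

lemma aSeq_props {s : ℝ × ℝ} (hs : s ∈ H.verts) (k : ℕ) :
    H.aSeq s k ∈ H.verts ∧ H.covisible s (H.aSeq s k) ∧ H.lhit (H.aSeq s k) ≤ H.lhit s := by
  have hsR : s ∈ H.region := verts_subset_region hs
  induction k with
  | zero => exact ⟨hs, covisible_self hsR, le_refl _⟩
  | succ k ih =>
    rw [aSeq_succ_def]
    by_cases hemp : {v | v ∈ H.Nbr s ∧ H.lhit v < H.lhit (H.aSeq s k)} = ∅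
    · rw [if_pos hemp]; exact ih
    · rw [if_neg hemp]
      set A := {v | v ∈ H.Nbr s ∧ H.lhit v < H.lhit (H.aSeq s k)} with hA
      have hAfin : A.Finite := verts_finite.subset fun w hw => hw.1.1
      have hAne : A.Nonempty := Set.nonempty_iff_ne_empty.2 hemp
      obtain ⟨hmem, -⟩ := choice_mem hAfin hAne
      obtain ⟨hN, hlt⟩ := hmem
      refine ⟨hN.1, ?_, le_trans hlt.le ih.2.2⟩
      rcases hN.2 with heq | hcov
      · rw [heq]; exact covisible_self hsR
      · exact hcov


/-! ### the top-bottom flip -/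

lemma sSup_neg_set (s : Set ℝ) : sSup (-s) = -sInf s := by rw [Real.sInf_def]; ring

lemma sInf_neg_set (s : Set ℝ) : sInf (-s) = -sSup s := by rw [Real.sInf_def, neg_neg]

variable (H)

def flipY : DoubleHistogram where
  m := H.n
  n := H.m
  hm := H.hn
  hn := H.hm
  xs := H.ys
  ys := H.xs
  d := fun j => -H.h j
  h := fun i => -H.d i
  xs_mono := H.ys_mono
  ys_mono := H.xs_mono
  left_eq := H.left_eq.symm
  right_eq := H.right_eq.symm
  d_neg := fun j => neg_neg_iff_pos.2 (H.h_pos j)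
  h_pos := fun i => neg_pos.2 (H.d_neg i)
  d_inj := fun a b hab => H.h_inj (neg_injective hab)
  h_inj := fun a b hab => H.d_inj (neg_injective hab)
  gen_pos := fun i j hij =>
    ((H.gen_pos j i hij.symm).imp (fun h => ⟨h.2, h.1⟩) fun h => ⟨h.2, h.1⟩)

variable {H}

lemma mem_region_flipY {p : ℝ × ℝ} :
    p ∈ (flipY H).region ↔ (p.1, -p.2) ∈ H.region := by
  constructor
  · intro hp
    rcases mem_region_iff.1 hp with ⟨i, hx, hy1, hy2⟩ | ⟨j, hx, hy1, hy2⟩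
    · refine mem_region_iff.2 (Or.inr ⟨i, hx, ?_, ?_⟩)
      · show (0 : ℝ) ≤ -p.2
        have : p.2 ≤ 0 := hy2
        linarith
      · show -p.2 ≤ H.h i
        have : -H.h i ≤ p.2 := hy1
        linarith
    · refine mem_region_iff.2 (Or.inl ⟨j, hx, ?_, ?_⟩)
      · show H.d j ≤ -p.2
        have : p.2 ≤ -H.d j := hy2
        linarith
      · show -p.2 ≤ (0 : ℝ)
        have : (0 : ℝ) ≤ p.2 := hy1
        linarith
  · intro hp
    rcases mem_region_iff.1 hp with ⟨i, hx, hy1, hy2⟩ | ⟨j, hx, hy1, hy2⟩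
    · refine mem_region_iff.2 (Or.inr ⟨i, hx, ?_, ?_⟩)
      · show (0 : ℝ) ≤ p.2
        have : -p.2 ≤ (0 : ℝ) := hy2
        linarith
      · show p.2 ≤ -H.d i
        have : H.d i ≤ -p.2 := hy1
        linarith
    · refine mem_region_iff.2 (Or.inl ⟨j, hx, ?_, ?_⟩)
      · show -H.h j ≤ p.2
        have : -p.2 ≤ H.h j := hy2
        linarith
      · show p.2 ≤ (0 : ℝ)
        have : (0 : ℝ) ≤ -p.2 := hy1
        linarith

lemma mem_verts_flipY {p : ℝ × ℝ} :
    p ∈ (flipY H).verts ↔ (p.1, -p.2) ∈ H.verts := by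
  simp only [verts, Set.mem_union, Set.mem_iUnion, Set.mem_insert_iff,
    Set.mem_singleton_iff]
  constructor
  · rintro (⟨i, rfl | rfl⟩ | ⟨j, rfl | rfl⟩)
    · exact Or.inr ⟨i, Or.inl (Prod.ext rfl (neg_neg _))⟩
    · exact Or.inr ⟨i, Or.inr (Prod.ext rfl (neg_neg _))⟩
    · exact Or.inl ⟨j, Or.inl (Prod.ext rfl (neg_neg _))⟩
    · exact Or.inl ⟨j, Or.inr (Prod.ext rfl (neg_neg _))⟩
  · rintro (⟨i, hi | hi⟩ | ⟨j, hj | hj⟩)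
    · have h1 := congrArg Prod.fst hi
      have h2 := congrArg Prod.snd hi
      simp only at h1 h2
      exact Or.inr ⟨i, Or.inl (Prod.ext h1 (show p.2 = -H.d i by linarith))⟩
    · have h1 := congrArg Prod.fst hi
      have h2 := congrArg Prod.snd hi
      simp only at h1 h2
      exact Or.inr ⟨i, Or.inr (Prod.ext h1 (show p.2 = -H.d i by linarith))⟩
    · have h1 := congrArg Prod.fst hj
      have h2 := congrArg Prod.snd hj
      simp only at h1 h2
      exact Or.inl ⟨j, Or.inl (Prod.ext h1 (show p.2 = -H.h j by linarith))⟩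
    · have h1 := congrArg Prod.fst hj
      have h2 := congrArg Prod.snd hj
      simp only at h1 h2
      exact Or.inl ⟨j, Or.inr (Prod.ext h1 (show p.2 = -H.h j by linarith))⟩

lemma mem_Icc_minmax_neg {a b y : ℝ} :
    y ∈ Icc (min a b) (max a b) ↔ -y ∈ Icc (min (-a) (-b)) (max (-a) (-b)) := by
  rw [min_neg_neg, max_neg_neg]
  simp only [Set.mem_Icc]
  constructor <;> intro h <;> constructor <;> linarith [h.1, h.2]

lemma covisible_flipY {p q : ℝ × ℝ} :
    (flipY H).covisible p q ↔ H.covisible (p.1, -p.2) (q.1, -q.2) := by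
  constructor
  · intro hc
    rintro ⟨x, y⟩ ⟨hx, hy⟩
    simp only at hx hy
    have hy' : -y ∈ Icc (min p.2 q.2) (max p.2 q.2) := by
      have := (mem_Icc_minmax_neg (a := -p.2) (b := -q.2) (y := y)).1 hy
      simpa using this
    have := mem_region_flipY.1 (hc (Set.mk_mem_prod hx hy'))
    simpa using this
  · intro hc
    rintro ⟨x, y⟩ ⟨hx, hy⟩
    simp only at hx hy
    rw [mem_region_flipY]
    exact hc (Set.mk_mem_prod hx ((mem_Icc_minmax_neg (a := p.2) (b := q.2)).1 hy))

lemma lhit_flipY {p : ℝ × ℝ} : (flipY H).lhit (p.1, -p.2) = H.lhit p := by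
  unfold lhit
  congr 1
  ext x
  simp only [Set.mem_setOf_eq]
  constructor
  · rintro ⟨h1, h2⟩
    refine ⟨h1, ?_⟩
    rintro ⟨x', y'⟩ ⟨hx', hy'⟩
    simp only [Set.mem_singleton_iff] at hy'
    have := mem_region_flipY.1 (h2 (Set.mk_mem_prod hx' rfl))
    simp only [neg_neg] at this
    rw [hy']; exact this
  · rintro ⟨h1, h2⟩
    refine ⟨h1, ?_⟩
    rintro ⟨x', y'⟩ ⟨hx', hy'⟩
    simp only [Set.mem_singleton_iff] at hy'
    subst hy'
    rw [mem_region_flipY]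
    simp only [neg_neg]
    exact h2 (Set.mk_mem_prod hx' rfl)

lemma nearY_flipY {x side : ℝ} (hside : side ≠ 0) :
    (flipY H).nearY x (-side) = -(H.nearY x side) := by
  rcases lt_or_gt_of_ne hside with hneg | hpos
  · unfold nearY
    rw [if_neg (by linarith : ¬(-side < 0)), if_pos hneg]
    have hset : {y | 0 < y ∧ (x, y) ∈ (flipY H).verts} =
        -{y | y < 0 ∧ (x, y) ∈ H.verts} := by
      ext y
      simp only [Set.mem_neg, Set.mem_setOf_eq]
      rw [mem_verts_flipY]
      constructor
      · rintro ⟨h1, h2⟩; exact ⟨by linarith, h2⟩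
      · rintro ⟨h1, h2⟩; exact ⟨by linarith, h2⟩
    rw [hset, sInf_neg_set]
  · unfold nearY
    rw [if_pos (by linarith : -side < 0), if_neg (by linarith : ¬(side < 0))]
    have hset : {y | y < 0 ∧ (x, y) ∈ (flipY H).verts} =
        -{y | 0 < y ∧ (x, y) ∈ H.verts} := by
      ext y
      simp only [Set.mem_neg, Set.mem_setOf_eq]
      rw [mem_verts_flipY]
      constructor
      · rintro ⟨h1, h2⟩; exact ⟨by linarith, h2⟩
      · rintro ⟨h1, h2⟩; exact ⟨by linarith, h2⟩
    rw [hset, sSup_neg_set]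

lemma lpt_flipY {p : ℝ × ℝ} (hp : p.2 ≠ 0) :
    (flipY H).lpt (p.1, -p.2) = ((H.lpt p).1, -(H.lpt p).2) := by
  have hxs0 : (flipY H).xs 0 = H.xs 0 := H.left_eq
  unfold lpt
  rw [lhit_flipY, hxs0]
  by_cases h0 : H.lhit p = H.xs 0
  · rw [if_pos h0, if_pos h0]
  · rw [if_neg h0, if_neg h0, nearY_flipY hp]

/-! ### bottom versions via flipY -/

lemma sees_own_L_bot {prev : ℝ × ℝ} (hp : prev ∈ H.region) (h2 : prev.2 < 0) :
    H.covisible (H.lpt prev) prev := by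
  have hp' : ((prev.1, -prev.2) : ℝ × ℝ) ∈ (flipY H).region := by
    rw [mem_region_flipY]; simpa using hp
  have h2' : (0 : ℝ) < ((prev.1, -prev.2) : ℝ × ℝ).2 := by simpa using h2
  have := sees_own_L hp' h2'
  rw [lpt_flipY h2.ne, covisible_flipY] at this
  simpa using this

lemma sees_L_bot {s prev v : ℝ × ℝ}
    (hsR : s ∈ H.region) (hprevR : prev ∈ H.region) (hvR : v ∈ H.region)
    (h2 : prev.2 < 0)
    (hsp : H.covisible s prev) (hsv : H.covisible s v)
    (hs1 : H.lhit prev ≤ s.1)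
    (hlt : H.lhit v < H.lhit prev)
    (hmin : ∀ w, w ∈ H.verts → H.covisible s w → H.lhit w < H.lhit prev → v.1 ≤ w.1)
    (hcase : prev.1 ≤ v.1 ∨ prev = s) :
    H.covisible (H.lpt prev) v := by
  set P := flipY H with hP
  set s' : ℝ × ℝ := (s.1, -s.2) with hs'
  set p' : ℝ × ℝ := (prev.1, -prev.2) with hp'
  set v' : ℝ × ℝ := (v.1, -v.2) with hv'
  have hsR' : s' ∈ P.region := by rw [hP, mem_region_flipY]; simpa [hs'] using hsR
  have hpR' : p' ∈ P.region := by rw [hP, mem_region_flipY]; simpa [hp'] using hprevR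
  have hvR' : v' ∈ P.region := by rw [hP, mem_region_flipY]; simpa [hv'] using hvR
  have h2' : 0 < p'.2 := by simpa [hp'] using h2
  have hlp : P.lhit p' = H.lhit prev := lhit_flipY
  have hlv : P.lhit v' = H.lhit v := lhit_flipY
  have hls : P.lhit s' = H.lhit s := lhit_flipY
  have hsp' : P.covisible s' p' := by rw [hP, covisible_flipY]; simpa [hs', hp'] using hsp
  have hsv' : P.covisible s' v' := by rw [hP, covisible_flipY]; simpa [hs', hv'] using hsv
  have hs1' : P.lhit p' ≤ s'.1 := by rw [hlp]; exact hs1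
  have hlt' : P.lhit v' < P.lhit p' := by rw [hlp, hlv]; exact hlt
  have hmin' : ∀ w, w ∈ P.verts → P.covisible s' w → P.lhit w < P.lhit p' → v'.1 ≤ w.1 := by
    intro w hw hcw hlw
    have hw2 : w = ((w.1, -(-w.2)) : ℝ × ℝ) := by simp
    have hwH : ((w.1, -w.2) : ℝ × ℝ) ∈ H.verts := by
      rw [← mem_verts_flipY]; exact hw
    have hcwH : H.covisible s (w.1, -w.2) := by
      have := covisible_flipY.1 (show (flipY H).covisible s' w from hcw)
      simpa [hs'] using this
    have hlwH : H.lhit (w.1, -w.2) < H.lhit prev := by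
      rw [← hlp]
      calc H.lhit (w.1, -w.2) = P.lhit ((w.1, -(-w.2)) : ℝ × ℝ) := lhit_flipY.symm
        _ = P.lhit w := by rw [← hw2]
        _ < P.lhit p' := hlw
    exact hmin (w.1, -w.2) hwH hcwH hlwH
  have hcase' : p'.1 ≤ v'.1 ∨ p' = s' := by
    rcases hcase with h | h
    · exact Or.inl h
    · exact Or.inr (by rw [hp', hs', h])
  have := sees_L hsR' hpR' hvR' h2' hsp' hsv' hs1' hlt' hmin' hcase'
  rw [hP, lpt_flipY h2.ne] at this
  have := covisible_flipY.1 this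
  simpa [hv'] using this


/-! ### sign of a vertex -/

lemma verts_snd_ne {p : ℝ × ℝ} (hp : p ∈ H.verts) : p.2 < 0 ∨ 0 < p.2 := by
  simp only [verts, Set.mem_union, Set.mem_iUnion, Set.mem_insert_iff,
    Set.mem_singleton_iff] at hp
  rcases hp with ⟨i, rfl | rfl⟩ | ⟨j, rfl | rfl⟩
  · exact Or.inl (H.d_neg i)
  · exact Or.inl (H.d_neg i)
  · exact Or.inr (H.h_pos j)
  · exact Or.inr (H.h_pos j)

/-! ### the a-side statement -/

lemma a_side {s : ℝ × ℝ} (hs : s ∈ H.verts) (k : ℕ) :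
    H.covisible (H.lpt (H.aSeq s k)) (H.aSeq s (k + 1)) := by
  have hsR : s ∈ H.region := verts_subset_region hs
  obtain ⟨hprevV, hsp, hlhit⟩ := aSeq_props hs k
  have hprevR : H.aSeq s k ∈ H.region := verts_subset_region hprevV
  rw [aSeq_succ_def]
  by_cases hemp : {v | v ∈ H.Nbr s ∧ H.lhit v < H.lhit (H.aSeq s k)} = ∅
  · rw [if_pos hemp]
    rcases verts_snd_ne hprevV with hneg | hpos
    · exact sees_own_L_bot hprevR hneg
    · exact sees_own_L hprevR hpos
  · rw [if_neg hemp]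
    set A := {v | v ∈ H.Nbr s ∧ H.lhit v < H.lhit (H.aSeq s k)} with hAdef
    have hAfin : A.Finite := verts_finite.subset fun w hw => hw.1.1
    have hAne : A.Nonempty := Set.nonempty_iff_ne_empty.2 hemp
    obtain ⟨hvA, hvmin⟩ := choice_mem hAfin hAne
    set v : ℝ × ℝ := (sInf {x | ∃ y, (x, y) ∈ A},
      closestToBase {y | (sInf {x | ∃ y, (x, y) ∈ A}, y) ∈ A}) with hvdef
    have hvN : v ∈ H.Nbr s := hvA.1
    have hvV : v ∈ H.verts := hvN.1
    have hvR : v ∈ H.region := verts_subset_region hvV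
    have hvlt : H.lhit v < H.lhit (H.aSeq s k) := hvA.2
    have hsv : H.covisible s v := by
      rcases hvN.2 with heq | h
      · rw [heq]; exact covisible_self hsR
      · exact h
    have hs1 : H.lhit (H.aSeq s k) ≤ s.1 := le_trans hlhit (lhit_le hsR)
    have hmin : ∀ w, w ∈ H.verts → H.covisible s w →
        H.lhit w < H.lhit (H.aSeq s k) → v.1 ≤ w.1 := by
      intro w hw hcw hlw
      exact hvmin w ⟨⟨hw, Or.inr hcw⟩, hlw⟩
    have hcase : (H.aSeq s k).1 ≤ v.1 ∨ H.aSeq s k = s := by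
      cases k with
      | zero => exact Or.inr rfl
      | succ k' =>
        left
        by_cases hemp' : {w | w ∈ H.Nbr s ∧ H.lhit w < H.lhit (H.aSeq s k')} = ∅
        · exfalso
          have hpe : H.aSeq s (k' + 1) = H.aSeq s k' := by
            rw [aSeq_succ_def, if_pos hemp']
          refine hemp ?_
          have hAe : A = {w | w ∈ H.Nbr s ∧ H.lhit w < H.lhit (H.aSeq s k')} := by
            rw [hAdef, hpe]
          rw [hAdef] at hAe
          exact hAe.trans hemp'
        · set A' := {w | w ∈ H.Nbr s ∧ H.lhit w < H.lhit (H.aSeq s k')} with hA'def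
          have hA'fin : A'.Finite := verts_finite.subset fun w hw => hw.1.1
          have hA'ne : A'.Nonempty := Set.nonempty_iff_ne_empty.2 hemp'
          obtain ⟨hpA', hpmin⟩ := choice_mem hA'fin hA'ne
          have hpe : H.aSeq s (k' + 1) = (sInf {x | ∃ y, (x, y) ∈ A'},
              closestToBase {y | (sInf {x | ∃ y, (x, y) ∈ A'}, y) ∈ A'}) := by
            rw [aSeq_succ_def, if_neg hemp']
          have hprevlt : H.lhit (H.aSeq s (k' + 1)) < H.lhit (H.aSeq s k') := by
            rw [hpe]; exact hpA'.2
          have hvA' : v ∈ A' := ⟨hvN, lt_trans hvlt hprevlt⟩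
          have hle := hpmin v hvA'
          rw [hpe]
          exact hle
    rcases verts_snd_ne hprevV with hneg | hpos
    · exact sees_L_bot hsR hprevR hvR hneg hsp hsv hs1 hvlt hmin hcase
    · exact sees_L hsR hprevR hvR hpos hsp hsv hs1 hvlt hmin hcase


/-! ### the left-right flip -/

variable (H)

def flipX : DoubleHistogram where
  m := H.m
  n := H.n
  hm := H.hm
  hn := H.hn
  xs := fun i => -H.xs i.rev
  ys := fun j => -H.ys j.rev
  d := fun i => H.d i.rev
  h := fun j => H.h j.rev
  xs_mono := fun a b hab => neg_lt_neg (H.xs_mono (Fin.rev_lt_rev.2 hab))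
  ys_mono := fun a b hab => neg_lt_neg (H.ys_mono (Fin.rev_lt_rev.2 hab))
  left_eq := by simp only [Fin.rev_zero]; rw [H.right_eq]
  right_eq := by simp only [Fin.rev_last]; rw [H.left_eq]
  d_neg := fun i => H.d_neg i.rev
  h_pos := fun j => H.h_pos j.rev
  d_inj := fun a b hab => Fin.rev_injective (H.d_inj hab)
  h_inj := fun a b hab => Fin.rev_injective (H.h_inj hab)
  gen_pos := by
    intro i j hij
    rcases H.gen_pos i.rev j.rev (neg_injective hij) with ⟨h1, h2⟩ | ⟨h1, h2⟩
    · refine Or.inr ⟨?_, ?_⟩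
      · rw [← Fin.rev_rev i, h1, Fin.rev_zero]
      · rw [← Fin.rev_rev j, h2, Fin.rev_zero]
    · refine Or.inl ⟨?_, ?_⟩
      · rw [← Fin.rev_rev i, h1, Fin.rev_last]
      · rw [← Fin.rev_rev j, h2, Fin.rev_last]

variable {H}

lemma flipX_xs_castSucc (i : Fin H.m) :
    (flipX H).xs i.castSucc = -H.xs i.rev.succ := by
  show -H.xs i.castSucc.rev = _
  rw [Fin.rev_castSucc]

lemma flipX_xs_succ (i : Fin H.m) :
    (flipX H).xs i.succ = -H.xs i.rev.castSucc := by
  show -H.xs i.succ.rev = _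
  rw [Fin.rev_succ]

lemma flipX_ys_castSucc (j : Fin H.n) :
    (flipX H).ys j.castSucc = -H.ys j.rev.succ := by
  show -H.ys j.castSucc.rev = _
  rw [Fin.rev_castSucc]

lemma flipX_ys_succ (j : Fin H.n) :
    (flipX H).ys j.succ = -H.ys j.rev.castSucc := by
  show -H.ys j.succ.rev = _
  rw [Fin.rev_succ]

lemma mem_region_flipX {p : ℝ × ℝ} :
    p ∈ (flipX H).region ↔ (-p.1, p.2) ∈ H.region := by
  constructor
  · intro hp
    rcases mem_region_iff.1 hp with ⟨i, ⟨hx1, hx2⟩, hy⟩ | ⟨j, ⟨hx1, hx2⟩, hy⟩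
    · refine mem_region_iff.2 (Or.inl ⟨i.rev, ⟨?_, ?_⟩, hy⟩)
      · show H.xs i.rev.castSucc ≤ -p.1
        erw [flipX_xs_succ] at hx2; exact le_neg_of_le_neg hx2
      · show -p.1 ≤ H.xs i.rev.succ
        erw [flipX_xs_castSucc] at hx1; exact neg_le_of_neg_le hx1
    · refine mem_region_iff.2 (Or.inr ⟨j.rev, ⟨?_, ?_⟩, hy⟩)
      · show H.ys j.rev.castSucc ≤ -p.1
        erw [flipX_ys_succ] at hx2; exact le_neg_of_le_neg hx2
      · show -p.1 ≤ H.ys j.rev.succ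
        erw [flipX_ys_castSucc] at hx1; exact neg_le_of_neg_le hx1
  · intro hp
    rcases mem_region_iff.1 hp with ⟨i, ⟨hx1, hx2⟩, hy⟩ | ⟨j, ⟨hx1, hx2⟩, hy⟩
    · refine mem_region_iff.2 (Or.inl ⟨i.rev, ⟨?_, ?_⟩, ?_⟩)
      · erw [flipX_xs_castSucc, Fin.rev_rev]
        show -H.xs i.succ ≤ p.1
        have h2' : -p.1 ≤ H.xs i.succ := hx2
        linarith
      · erw [flipX_xs_succ, Fin.rev_rev]
        show p.1 ≤ -H.xs i.castSucc
        have h1' : H.xs i.castSucc ≤ -p.1 := hx1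
        linarith
      · show H.d i.rev.rev ≤ p.2 ∧ p.2 ≤ 0
        rw [Fin.rev_rev]
        exact hy
    · refine mem_region_iff.2 (Or.inr ⟨j.rev, ⟨?_, ?_⟩, ?_⟩)
      · erw [flipX_ys_castSucc, Fin.rev_rev]
        show -H.ys j.succ ≤ p.1
        have h2' : -p.1 ≤ H.ys j.succ := hx2
        linarith
      · erw [flipX_ys_succ, Fin.rev_rev]
        show p.1 ≤ -H.ys j.castSucc
        have h1' : H.ys j.castSucc ≤ -p.1 := hx1
        linarith
      · show (0 : ℝ) ≤ p.2 ∧ p.2 ≤ H.h j.rev.rev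
        rw [Fin.rev_rev]
        exact hy


lemma mem_verts_flipX {p : ℝ × ℝ} :
    p ∈ (flipX H).verts ↔ ((-p.1, p.2) : ℝ × ℝ) ∈ H.verts := by
  simp only [verts, Set.mem_union, Set.mem_iUnion, Set.mem_insert_iff,
    Set.mem_singleton_iff]
  constructor
  · rintro (⟨i, rfl | rfl⟩ | ⟨j, rfl | rfl⟩)
    · exact Or.inl ⟨i.rev, Or.inr (Prod.ext
        (by show -(-H.xs i.castSucc.rev) = H.xs i.rev.succ; rw [neg_neg, Fin.rev_castSucc]) rfl)⟩
    · exact Or.inl ⟨i.rev, Or.inl (Prod.ext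
        (by show -(-H.xs i.succ.rev) = H.xs i.rev.castSucc; rw [neg_neg, Fin.rev_succ]) rfl)⟩
    · exact Or.inr ⟨j.rev, Or.inr (Prod.ext
        (by show -(-H.ys j.castSucc.rev) = H.ys j.rev.succ; rw [neg_neg, Fin.rev_castSucc]) rfl)⟩
    · exact Or.inr ⟨j.rev, Or.inl (Prod.ext
        (by show -(-H.ys j.succ.rev) = H.ys j.rev.castSucc; rw [neg_neg, Fin.rev_succ]) rfl)⟩
  · rintro (⟨i, hi | hi⟩ | ⟨j, hj | hj⟩)
    · have h1 := congrArg Prod.fst hi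
      have h2 := congrArg Prod.snd hi
      simp only at h1 h2
      refine Or.inl ⟨i.rev, Or.inr (Prod.ext ?_ ?_)⟩
      · erw [flipX_xs_succ, Fin.rev_rev]; show p.1 = -H.xs i.castSucc; linarith
      · show p.2 = H.d i.rev.rev
        rw [Fin.rev_rev]; exact h2
    · have h1 := congrArg Prod.fst hi
      have h2 := congrArg Prod.snd hi
      simp only at h1 h2
      refine Or.inl ⟨i.rev, Or.inl (Prod.ext ?_ ?_)⟩
      · erw [flipX_xs_castSucc, Fin.rev_rev]; show p.1 = -H.xs i.succ; linarith
      · show p.2 = H.d i.rev.rev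
        rw [Fin.rev_rev]; exact h2
    · have h1 := congrArg Prod.fst hj
      have h2 := congrArg Prod.snd hj
      simp only at h1 h2
      refine Or.inr ⟨j.rev, Or.inr (Prod.ext ?_ ?_)⟩
      · erw [flipX_ys_succ, Fin.rev_rev]; show p.1 = -H.ys j.castSucc; linarith
      · show p.2 = H.h j.rev.rev
        rw [Fin.rev_rev]; exact h2
    · have h1 := congrArg Prod.fst hj
      have h2 := congrArg Prod.snd hj
      simp only at h1 h2
      refine Or.inr ⟨j.rev, Or.inl (Prod.ext ?_ ?_)⟩
      · erw [flipX_ys_castSucc, Fin.rev_rev]; show p.1 = -H.ys j.succ; linarith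
      · show p.2 = H.h j.rev.rev
        rw [Fin.rev_rev]; exact h2

lemma covisible_flipX {p q : ℝ × ℝ} :
    (flipX H).covisible p q ↔ H.covisible (-p.1, p.2) (-q.1, q.2) := by
  constructor
  · intro hc
    rintro ⟨x, y⟩ ⟨hx, hy⟩
    simp only at hx hy
    have hx' : -x ∈ Icc (min p.1 q.1) (max p.1 q.1) := by
      have := (mem_Icc_minmax_neg (a := -p.1) (b := -q.1) (y := x)).1 hx
      simpa using this
    have := mem_region_flipX.1 (hc (Set.mk_mem_prod hx' hy))
    simpa using this
  · intro hc
    rintro ⟨x, y⟩ ⟨hx, hy⟩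
    simp only at hx hy
    rw [mem_region_flipX]
    exact hc (Set.mk_mem_prod ((mem_Icc_minmax_neg (a := p.1) (b := q.1)).1 hx) hy)

lemma lhit_flipX {p : ℝ × ℝ} : (flipX H).lhit (-p.1, p.2) = -H.rhit p := by
  unfold lhit rhit
  rw [show {x | x ≤ ((-p.1, p.2) : ℝ × ℝ).1 ∧
      Icc x ((-p.1, p.2) : ℝ × ℝ).1 ×ˢ ({((-p.1, p.2) : ℝ × ℝ).2} : Set ℝ) ⊆ (flipX H).region}
      = -{x | p.1 ≤ x ∧ Icc p.1 x ×ˢ ({p.2} : Set ℝ) ⊆ H.region} from ?_, sInf_neg_set]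
  ext x
  simp only [Set.mem_neg, Set.mem_setOf_eq]
  constructor
  · rintro ⟨h1, h2⟩
    have h1' : x ≤ -p.1 := h1
    refine ⟨by linarith, ?_⟩
    rintro ⟨x', y'⟩ ⟨hx', hy'⟩
    simp only [Set.mem_singleton_iff] at hy'
    subst hy'
    simp only [Set.mem_Icc] at hx'
    have hmem : ((-x', p.2) : ℝ × ℝ) ∈ (flipX H).region := by
      refine h2 (Set.mk_mem_prod ?_ rfl)
      simp only [Set.mem_Icc]
      refine ⟨?_, ?_⟩
      · linarith [hx'.2]
      · show -x' ≤ -p.1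
        linarith [hx'.1]
    have := mem_region_flipX.1 hmem
    simpa using this
  · rintro ⟨h1, h2⟩
    refine ⟨show x ≤ -p.1 by linarith, ?_⟩
    rintro ⟨x', y'⟩ ⟨hx', hy'⟩
    simp only [Set.mem_singleton_iff] at hy'
    subst hy'
    simp only [Set.mem_Icc] at hx'
    rw [mem_region_flipX]
    refine h2 (Set.mk_mem_prod ?_ rfl)
    simp only [Set.mem_Icc]
    have hx1 : x ≤ x' := hx'.1
    have hx2 : x' ≤ -p.1 := hx'.2
    exact ⟨by linarith, by linarith⟩

lemma nearY_flipX {x side : ℝ} : (flipX H).nearY (-x) side = H.nearY x side := by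
  unfold nearY
  have hs1 : {y | y < 0 ∧ ((-x, y) : ℝ × ℝ) ∈ (flipX H).verts} =
      {y | y < 0 ∧ ((x, y) : ℝ × ℝ) ∈ H.verts} := by
    ext y
    simp only [Set.mem_setOf_eq]
    rw [mem_verts_flipX]
    simp
  have hs2 : {y | 0 < y ∧ ((-x, y) : ℝ × ℝ) ∈ (flipX H).verts} =
      {y | 0 < y ∧ ((x, y) : ℝ × ℝ) ∈ H.verts} := by
    ext y
    simp only [Set.mem_setOf_eq]
    rw [mem_verts_flipX]
    simp
  split_ifs with h
  · rw [hs1]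
  · rw [hs2]

lemma rpt_fst {v : ℝ × ℝ} : (H.rpt v).1 = H.rhit v := by
  unfold rpt; split_ifs with h
  · exact h.symm
  · rfl

lemma lpt_flipX {p : ℝ × ℝ} :
    (flipX H).lpt (-p.1, p.2) = (-(H.rpt p).1, (H.rpt p).2) := by
  unfold lpt rpt
  rw [lhit_flipX]
  have hxs0 : (flipX H).xs 0 = -H.xs (Fin.last H.m) := by
    show -H.xs (Fin.rev 0) = _
    rw [Fin.rev_zero]
  rw [hxs0]
  by_cases h0 : H.rhit p = H.xs (Fin.last H.m)
  · rw [if_pos (by rw [h0]), if_pos h0]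
  · rw [if_neg (fun hc => h0 (neg_injective hc)), if_neg h0, nearY_flipX]

lemma Nbr_flipX {s w : ℝ × ℝ} :
    w ∈ (flipX H).Nbr (-s.1, s.2) ↔ ((-w.1, w.2) : ℝ × ℝ) ∈ H.Nbr s := by
  unfold Nbr
  simp only [Set.mem_setOf_eq]
  constructor
  · rintro ⟨hv, heq | hcov⟩
    · refine ⟨mem_verts_flipX.1 hv, Or.inl ?_⟩
      rw [heq]
      exact Prod.ext (by show -(-s.1) = s.1; rw [neg_neg]) rfl
    · refine ⟨mem_verts_flipX.1 hv, Or.inr ?_⟩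
      have := covisible_flipX.1 hcov
      simpa using this
  · rintro ⟨hv, heq | hcov⟩
    · refine ⟨mem_verts_flipX.2 hv, Or.inl ?_⟩
      have h1 := congrArg Prod.fst heq
      have h2 := congrArg Prod.snd heq
      simp only at h1 h2
      exact Prod.ext (by show w.1 = -s.1; linarith) h2
    · refine ⟨mem_verts_flipX.2 hv, Or.inr ?_⟩
      refine covisible_flipX.2 ?_
      simpa using hcov

lemma bSeq_succ_def (s : ℝ × ℝ) (k : ℕ) :
    H.bSeq s (k + 1) =
      (if {v | v ∈ H.Nbr s ∧ H.rhit (H.bSeq s k) < H.rhit v} = ∅ then H.bSeq s k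
       else
        (sSup {x | ∃ y, (x, y) ∈ {v | v ∈ H.Nbr s ∧ H.rhit (H.bSeq s k) < H.rhit v}},
          closestToBase {y |
            (sSup {x | ∃ y, (x, y) ∈ {v | v ∈ H.Nbr s ∧ H.rhit (H.bSeq s k) < H.rhit v}}, y) ∈
              {v | v ∈ H.Nbr s ∧ H.rhit (H.bSeq s k) < H.rhit v}})) := by
  have hset : {v : ℝ × ℝ | v ∈ H.Nbr s ∧ (H.rpt (H.bSeq s k)).1 < (H.rpt v).1} =
      {v | v ∈ H.Nbr s ∧ H.rhit (H.bSeq s k) < H.rhit v} := by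
    ext w
    simp only [Set.mem_setOf_eq, rpt_fst]
  show (if {v : ℝ × ℝ | v ∈ H.Nbr s ∧ (H.rpt (H.bSeq s k)).1 < (H.rpt v).1} = ∅
      then H.bSeq s k
      else
        (sSup {x | ∃ y, (x, y) ∈
            {v : ℝ × ℝ | v ∈ H.Nbr s ∧ (H.rpt (H.bSeq s k)).1 < (H.rpt v).1}},
          closestToBase {y |
            (sSup {x | ∃ y, (x, y) ∈
                {v : ℝ × ℝ | v ∈ H.Nbr s ∧ (H.rpt (H.bSeq s k)).1 < (H.rpt v).1}}, y) ∈
              {v : ℝ × ℝ | v ∈ H.Nbr s ∧ (H.rpt (H.bSeq s k)).1 < (H.rpt v).1}})) = _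
  rw [hset]

lemma aSeq_flipX (s : ℝ × ℝ) (k : ℕ) :
    (flipX H).aSeq (-s.1, s.2) k = (-(H.bSeq s k).1, (H.bSeq s k).2) := by
  induction k with
  | zero => rfl
  | succ k ih =>
    rw [aSeq_succ_def, bSeq_succ_def, ih]
    set B := {v | v ∈ H.Nbr s ∧ H.rhit (H.bSeq s k) < H.rhit v} with hBdef
    have hset : {v | v ∈ (flipX H).Nbr (-s.1, s.2) ∧
        (flipX H).lhit v < (flipX H).lhit (-(H.bSeq s k).1, (H.bSeq s k).2)} =
        (fun p : ℝ × ℝ => (-p.1, p.2)) '' B := by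
      have e2 : (flipX H).lhit (-(H.bSeq s k).1, (H.bSeq s k).2) = -H.rhit (H.bSeq s k) :=
        lhit_flipX
      ext w
      simp only [Set.mem_setOf_eq, Set.mem_image, hBdef]
      constructor
      · rintro ⟨hN, hlt⟩
        refine ⟨(-w.1, w.2), ⟨Nbr_flipX.1 hN, ?_⟩, ?_⟩
        · rw [e2] at hlt
          have e1 : (flipX H).lhit w = -H.rhit (-w.1, w.2) := by
            have h := lhit_flipX (H := H) (p := ((-w.1, w.2) : ℝ × ℝ))
            simpa using h
          rw [e1] at hlt
          linarith
        · exact Prod.ext (by show -(-w.1) = w.1; rw [neg_neg]) rfl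
      · rintro ⟨q, ⟨hN, hlt⟩, rfl⟩
        constructor
        · exact Nbr_flipX.2 (by simpa using hN)
        · rw [e2, lhit_flipX (p := q)]
          exact neg_lt_neg hlt
    by_cases hB : B = ∅
    · rw [if_pos (hset.trans (by rw [hB]; exact Set.image_empty _)), if_pos hB]
    · have hA'ne : {v | v ∈ (flipX H).Nbr (-s.1, s.2) ∧
          (flipX H).lhit v < (flipX H).lhit (-(H.bSeq s k).1, (H.bSeq s k).2)} ≠ ∅ := by
        rw [hset]
        intro hcon
        exact hB (Set.image_eq_empty.1 hcon)
      rw [if_neg hA'ne, if_neg hB]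
      have hX : {x | ∃ y, (x, y) ∈ (fun p : ℝ × ℝ => (-p.1, p.2)) '' B} =
          -{x | ∃ y, (x, y) ∈ B} := by
        ext x
        simp only [Set.mem_setOf_eq, Set.mem_neg, Set.mem_image]
        constructor
        · rintro ⟨y, q, hq, hqe⟩
          have h1 := congrArg Prod.fst hqe
          have h2 := congrArg Prod.snd hqe
          simp only at h1 h2
          refine ⟨y, ?_⟩
          have : ((-x, y) : ℝ × ℝ) = q := Prod.ext (by show -x = q.1; linarith) h2.symm
          rw [this]; exact hq
        · rintro ⟨y, hy⟩
          exact ⟨y, (-x, y), hy, Prod.ext (by show -(-x) = x; rw [neg_neg]) rfl⟩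
      have hY : ∀ z : ℝ, {y | ((z, y) : ℝ × ℝ) ∈ (fun p : ℝ × ℝ => (-p.1, p.2)) '' B} =
          {y | ((-z, y) : ℝ × ℝ) ∈ B} := by
        intro z
        ext y
        simp only [Set.mem_setOf_eq, Set.mem_image]
        constructor
        · rintro ⟨q, hq, hqe⟩
          have h1 := congrArg Prod.fst hqe
          have h2 := congrArg Prod.snd hqe
          simp only at h1 h2
          have : ((-z, y) : ℝ × ℝ) = q := Prod.ext (by show -z = q.1; linarith) h2.symm
          rw [this]; exact hq
        · intro hy
          exact ⟨(-z, y), hy, Prod.ext (by show -(-z) = z; rw [neg_neg]) rfl⟩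
      rw [hset]
      have hfst : sInf {x | ∃ y, (x, y) ∈ (fun p : ℝ × ℝ => (-p.1, p.2)) '' B} =
          -sSup {x | ∃ y, (x, y) ∈ B} := by
        rw [hX, sInf_neg_set]
      refine Prod.ext ?_ ?_
      · exact hfst
      · show closestToBase _ = closestToBase _
        congr 1
        rw [hfst, hY]
        congr 1
        rw [neg_neg]

lemma b_side {s : ℝ × ℝ} (hs : s ∈ H.verts) (k : ℕ) :
    H.covisible (H.rpt (H.bSeq s k)) (H.bSeq s (k + 1)) := by
  have hs' : ((-s.1, s.2) : ℝ × ℝ) ∈ (flipX H).verts := by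
    rw [mem_verts_flipX]
    simpa using hs
  have h := a_side (H := flipX H) hs' k
  rw [aSeq_flipX, aSeq_flipX, lpt_flipX] at h
  have := covisible_flipX.1 h
  simpa using this

end DoubleHistogram

/-- In a double histogram, for any vertex `s` and any `i ≥ 1`, the point
`ℓ^{i−1} = ℓ(a^{i-1}(s))` and the vertex `a^i(s)` are co-visible, and the point
`r^{i−1} = r(b^{i-1}(s))` and the vertex `b^i(s)` are co-visible. -/
theorem ai_sees_l_of_a_prev
    (H : DoubleHistogram) (s : ↥H.verts) (i : ℕ) (hi : 1 ≤ i) :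
    H.covisible (H.lpt (H.aSeq (s : ℝ × ℝ) (i - 1))) (H.aSeq (s : ℝ × ℝ) i) ∧
      H.covisible (H.rpt (H.bSeq (s : ℝ × ℝ) (i - 1))) (H.bSeq (s : ℝ × ℝ) i) := by
  obtain ⟨k, rfl⟩ : ∃ k, i = k + 1 := ⟨i - 1, (Nat.succ_pred_eq_of_pos hi).symm⟩
  simp only [Nat.add_sub_cancel]
  exact ⟨DoubleHistogram.a_side s.2 k, DoubleHistogram.b_side s.2 k⟩
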